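/- For any three unit vectors ψ₁, ψ₂, ψ₃ in a complex Hilbert space, the overlaps Δ_{ij} = |⟨ψᵢ,ψⱼ⟩|² satisfy 1 − Δ₁₂ − Δ₁₃ − Δ₂₃ + 2√(Δ₁₂Δ₁₃Δ₂₃) ≥ 0. -/

import Mathlib

/-! Removing from `ψ₂` and `ψ₃` their components along `ψ₁` leaves vectors of squared norms
`1 - Δ₁₂` and `1 - Δ₁₃` whose inner product is `⟨ψ₂,ψ₃⟩ - ⟨ψ₂,ψ₁⟩⟨ψ₁,ψ₃⟩`. Cauchy–Schwarz and the
reverse triangle inequality give `(√Δ₂₃ - √(Δ₁₂Δ₁₃))² ≤ (1 - Δ₁₂)(1 - Δ₁₃)`, and the difference of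
the two sides is exactly the claimed expression. -/

open scoped InnerProductSpace

section UnitVector

variable {𝕜 E : Type*} [RCLike 𝕜] [NormedAddCommGroup E] [InnerProductSpace 𝕜 E]
  {e : E}

theorem inner_sub_inner_smul_sub_inner_smul (he : ‖e‖ = 1) (x y : E) :
    ⟪x - ⟪e, x⟫_𝕜 • e, y - ⟪e, y⟫_𝕜 • e⟫_𝕜 = ⟪x, y⟫_𝕜 - ⟪x, e⟫_𝕜 * ⟪e, y⟫_𝕜 := by
  have hee : ⟪e, e⟫_𝕜 = 1 := by simp [inner_self_eq_norm_sq_to_K, he]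
  simp only [inner_sub_left, inner_sub_right, inner_smul_left, inner_smul_right, hee,
    inner_conj_symm]
  ring

theorem norm_sub_inner_smul_sq (he : ‖e‖ = 1) (x : E) :
    ‖x - ⟪e, x⟫_𝕜 • e‖ ^ 2 = ‖x‖ ^ 2 - ‖⟪e, x⟫_𝕜‖ ^ 2 := by
  have h := congrArg RCLike.re (inner_sub_inner_smul_sub_inner_smul (𝕜 := 𝕜) he x x)
  rwa [← inner_conj_symm x e, RCLike.conj_mul, map_sub, inner_self_eq_norm_sq,
    inner_self_eq_norm_sq, ← RCLike.ofReal_pow, RCLike.ofReal_re] at h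

theorem sq_norm_inner_sub_mul_le (he : ‖e‖ = 1) {x y : E} (hx : ‖x‖ = 1) (hy : ‖y‖ = 1) :
    (‖⟪x, y⟫_𝕜‖ - ‖⟪e, x⟫_𝕜‖ * ‖⟪e, y⟫_𝕜‖) ^ 2
      ≤ (1 - ‖⟪e, x⟫_𝕜‖ ^ 2) * (1 - ‖⟪e, y⟫_𝕜‖ ^ 2) := by
  have hCS := norm_inner_le_norm (𝕜 := 𝕜) (x - ⟪e, x⟫_𝕜 • e) (y - ⟪e, y⟫_𝕜 • e)
  rw [inner_sub_inner_smul_sub_inner_smul he] at hCS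
  have hrev : |‖⟪x, y⟫_𝕜‖ - ‖⟪e, x⟫_𝕜‖ * ‖⟪e, y⟫_𝕜‖| ≤ ‖⟪x, y⟫_𝕜 - ⟪x, e⟫_𝕜 * ⟪e, y⟫_𝕜‖ := by
    simpa [norm_mul, norm_inner_symm x e] using abs_norm_sub_norm_le ⟪x, y⟫_𝕜 (⟪x, e⟫_𝕜 * ⟪e, y⟫_𝕜)
  calc (‖⟪x, y⟫_𝕜‖ - ‖⟪e, x⟫_𝕜‖ * ‖⟪e, y⟫_𝕜‖) ^ 2
      ≤ (‖x - ⟪e, x⟫_𝕜 • e‖ * ‖y - ⟪e, y⟫_𝕜 • e‖) ^ 2 :=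
        sq_le_sq' (neg_le_of_abs_le (hrev.trans hCS)) (le_of_abs_le (hrev.trans hCS))
    _ = (1 - ‖⟪e, x⟫_𝕜‖ ^ 2) * (1 - ‖⟪e, y⟫_𝕜‖ ^ 2) := by
        rw [mul_pow, norm_sub_inner_smul_sq he, norm_sub_inner_smul_sq he, hx, hy, one_pow]

end UnitVector

theorem overlap_triple_inequality_general
    (E : Type*) [NormedAddCommGroup E] [InnerProductSpace ℂ E]
    (ψ₁ ψ₂ ψ₃ : E) (h₁ : ‖ψ₁‖ = 1) (h₂ : ‖ψ₂‖ = 1) (h₃ : ‖ψ₃‖ = 1) :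
    1 - ‖(inner ℂ ψ₁ ψ₂ : ℂ)‖ ^ 2 - ‖(inner ℂ ψ₁ ψ₃ : ℂ)‖ ^ 2 - ‖(inner ℂ ψ₂ ψ₃ : ℂ)‖ ^ 2
      + 2 * Real.sqrt (‖(inner ℂ ψ₁ ψ₂ : ℂ)‖ ^ 2 * ‖(inner ℂ ψ₁ ψ₃ : ℂ)‖ ^ 2
          * ‖(inner ℂ ψ₂ ψ₃ : ℂ)‖ ^ 2) ≥ 0 := by
  have hsqrt : Real.sqrt (‖⟪ψ₁, ψ₂⟫_ℂ‖ ^ 2 * ‖⟪ψ₁, ψ₃⟫_ℂ‖ ^ 2 * ‖⟪ψ₂, ψ₃⟫_ℂ‖ ^ 2)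
      = ‖⟪ψ₁, ψ₂⟫_ℂ‖ * ‖⟪ψ₁, ψ₃⟫_ℂ‖ * ‖⟪ψ₂, ψ₃⟫_ℂ‖ := by
    rw [← mul_pow, ← mul_pow, Real.sqrt_sq (by positivity)]
  rw [hsqrt]
  linear_combination sq_norm_inner_sub_mul_le (𝕜 := ℂ) h₁ h₂ h₃

/-- The overlaps `Δ_{ij} = |⟨ψᵢ,ψⱼ⟩|²` of any three unit vectors satisfy
`1 - Δ₁₂ - Δ₁₃ - Δ₂₃ + 2√(Δ₁₂Δ₁₃Δ₂₃) ≥ 0`. -/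
theorem overlap_triple_inequality
    (E : Type*) [NormedAddCommGroup E] [InnerProductSpace ℂ E]
    [FiniteDimensional ℂ E]
    (ψ₁ ψ₂ ψ₃ : E) (h₁ : ‖ψ₁‖ = 1) (h₂ : ‖ψ₂‖ = 1) (h₃ : ‖ψ₃‖ = 1) :
    1 - ‖(inner ℂ ψ₁ ψ₂ : ℂ)‖ ^ 2 - ‖(inner ℂ ψ₁ ψ₃ : ℂ)‖ ^ 2 - ‖(inner ℂ ψ₂ ψ₃ : ℂ)‖ ^ 2
      + 2 * Real.sqrt (‖(inner ℂ ψ₁ ψ₂ : ℂ)‖ ^ 2 * ‖(inner ℂ ψ₁ ψ₃ : ℂ)‖ ^ 2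
          * ‖(inner ℂ ψ₂ ψ₃ : ℂ)‖ ^ 2) ≥ 0 :=
  overlap_triple_inequality_general E ψ₁ ψ₂ ψ₃ h₁ h₂ h₃
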